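/- Along any radially reduced, affinely parametrized, future-directed null geodesic in the Schwarzschild exterior of mass M, the function s ↦ (r(s)²/Ω²(r(s)))·|p_u(s)| is differentiable and satisfies d/ds[(r²/Ω²)|p_u|] = 2((r−3M)/Ω⁴)·|p_u|². -/

import Mathlib

/-!
With `Ω² = 1 - 2M/r`, the weight `r²/Ω²` has derivative `2 (r - 3M) p_{r*} / Ω⁴` along the
geodesic, while `|p_u| = (E + p_{r*})/2` has derivative `(r - 3M) ℓ² / (2 r⁴)`. The null-shell
relation turns the angular term `Ω² ℓ² / r²` into `E² - p_{r*}² = (E - p_{r*})(E + p_{r*})`, so both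
terms of the product rule carry the factor `(r - 3M)(E + p_{r*}) / Ω⁴`, and the remaining factors
add up to `p_{r*} + (E - p_{r*})/2 = |p_u|`.
-/

theorem one_sub_two_mul_div_ne_zero {M r : ℝ} (hr : r ≠ 0) (hrM : r ≠ 2 * M) :
    1 - 2 * M / r ≠ 0 := by
  rw [one_sub_div hr]
  exact div_ne_zero (sub_ne_zero.mpr hrM) hr

section Derivatives

variable {f : ℝ → ℝ} {f' x : ℝ} {s : Set ℝ}

theorem HasDerivWithinAt.one_sub_const_div (hf : HasDerivWithinAt f f' s x) (hx : f x ≠ 0)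
    (c : ℝ) : HasDerivWithinAt (fun u => 1 - c / f u) (c * f' / f x ^ 2) s x := by
  refine (((hasDerivWithinAt_const x s c).fun_div hf hx).const_sub 1).congr_deriv ?_
  ring

theorem HasDerivWithinAt.sq_div_one_sub_two_mul_div (hf : HasDerivWithinAt f f' s x)
    (M : ℝ) (hx : f x ≠ 0) (hxM : f x ≠ 2 * M) :
    HasDerivWithinAt (fun u => f u ^ 2 / (1 - 2 * M / f u))
      (2 * (f x - 3 * M) / (1 - 2 * M / f x) ^ 2 * f') s x := by
  have hΩ := one_sub_two_mul_div_ne_zero hx hxM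
  refine ((hf.fun_pow 2).fun_div (hf.one_sub_const_div hx (2 * M)) hΩ).congr_deriv ?_
  field_simp
  ring

end Derivatives

theorem redshift_weight_product_rule_eq {M r p E ℓ : ℝ} (hr : r ≠ 0) (hrM : r ≠ 2 * M)
    (hnull : E ^ 2 = p ^ 2 + (1 - 2 * M / r) * ℓ ^ 2 / r ^ 2) :
    2 * (r - 3 * M) / (1 - 2 * M / r) ^ 2 * p * ((E + p) / 2)
        + r ^ 2 / (1 - 2 * M / r) * ((r - 3 * M) / r ^ 4 * ℓ ^ 2 / 2)
      = 2 * (r - 3 * M) / (1 - 2 * M / r) ^ 2 * ((E + p) / 2) ^ 2 := by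
  have hΩ := one_sub_two_mul_div_ne_zero hr hrM
  have hangular : (1 - 2 * M / r) * ℓ ^ 2 / r ^ 2 = (E - p) * (E + p) := by linarith
  calc _ = (r - 3 * M) / (1 - 2 * M / r) ^ 2 * (E + p) * p
            + (r - 3 * M) / (1 - 2 * M / r) ^ 2 * ((1 - 2 * M / r) * ℓ ^ 2 / r ^ 2) / 2 := by
        field_simp
    _ = _ := by rw [hangular]; ring

theorem schwarzschild_redshift_weight_derivative
    (M : ℝ) (hM : 0 < M)
    (I : Set ℝ)
    (r prs : ℝ → ℝ) (E ℓ : ℝ)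
    (hr2M : ∀ s ∈ I, 2 * M < r s)
    (hdr : ∀ s ∈ I, HasDerivWithinAt r (prs s) I s)
    (hdp : ∀ s ∈ I, HasDerivWithinAt prs ((r s - 3 * M) / (r s) ^ 4 * ℓ ^ 2) I s)
    (hnull : ∀ s ∈ I, E ^ 2 = (prs s) ^ 2 + (1 - 2 * M / r s) * ℓ ^ 2 / (r s) ^ 2) :
    ∀ s ∈ I,
      HasDerivWithinAt
        (fun u => (r u) ^ 2 / (1 - 2 * M / r u) * ((E + prs u) / 2))
        (2 * (r s - 3 * M) / (1 - 2 * M / r s) ^ 2 * ((E + prs s) / 2) ^ 2) I s := by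
  intro s hs
  have hr : r s ≠ 0 := (by linarith [hr2M s hs] : 0 < r s).ne'
  have hrM : r s ≠ 2 * M := (hr2M s hs).ne'
  have hweight := (hdr s hs).sq_div_one_sub_two_mul_div M hr hrM
  have hpu := ((hdp s hs).const_add E).div_const 2
  exact (hweight.mul hpu).congr_deriv (redshift_weight_product_rule_eq hr hrM (hnull s hs))
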